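/- arXiv:2506.17803 — 2 statements merged into one kernel-verified Lean document; each statement's English description precedes it below -/
import Mathlib

section
/- Let (N, P_S) be a channel with state on finite alphabets X, Y, S, let N̄ be its CSIR-augmented channel, and let Z be an NS-assisted coding scheme with message set {1,...,M} for N̄. Define the twirl Z'(x, ŵ | (w,s), (y,s_R)) = (1/M) Σ_{π ∈ C_M} Z(x, π(ŵ) | (π(w), s), (y, s_R)) over cyclic permutations C_M of {1,...,M}, and define Z''(x, ŵ | (w,s), y) := Z'(x, ŵ | (w,s), (y,s)). Then Z'' is a bipartite non-signaling box (transmitter input {1,...,M} × S, output X; receiver input Y, output {1,...,M}) — in particular Σ_x Z''(x,ŵ|(w,s),y) = 1/M for all arguments and Σ_ŵ Z''(x,ŵ|(w,s),y) depends only on (x,s) — and its success probability over N equals that of Z over N̄: η_N(Z'') = η_{N̄}(Z). -/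
open scoped BigOperators Classical
open Finset Filter

noncomputable section

/-- A probability mass function on a finite alphabet. -/
def IsPMF {A : Type*} [Fintype A] (p : A → ℝ) : Prop :=
  (∀ a, 0 ≤ p a) ∧ ∑ a, p a = 1

/-- A channel-with-state kernel `N(y|x,s)`. -/
def IsStateKernel {X S Y : Type*} [Fintype Y] (N : X → S → Y → ℝ) : Prop :=
  (∀ x s y, 0 ≤ N x s y) ∧ ∀ x s, ∑ y, N x s y = 1

/-- Bipartite non-signaling box: party 1 has input `a1`, output `b1`;
party 2 has input `a2`, output `b2`. -/
def IsNSBox {A1 A2 B1 B2 : Type*} [Fintype B1] [Fintype B2]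
    (Z : A1 → A2 → B1 → B2 → ℝ) : Prop :=
  (∀ a1 a2 b1 b2, 0 ≤ Z a1 a2 b1 b2) ∧
  (∀ a1 a2, ∑ b1, ∑ b2, Z a1 a2 b1 b2 = 1) ∧
  (∀ a1 a2 a2' b1, ∑ b2, Z a1 a2 b1 b2 = ∑ b2, Z a1 a2' b1 b2) ∧
  (∀ a1 a1' a2 b2, ∑ b1, Z a1 a2 b1 b2 = ∑ b1, Z a1' a2 b1 b2)

/-- Success probability of an NS-assisted coding scheme `Z(x, ŵ | (w,s), y)`. -/
def etaCWS {X S Y : Type*} [Fintype X] [Fintype S] [Fintype Y] (M : ℕ)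
    (N : X → S → Y → ℝ) (PS : S → ℝ)
    (Z : (Fin M × S) → Y → X → Fin M → ℝ) : ℝ :=
  (M : ℝ)⁻¹ * ∑ w, ∑ s, ∑ x, ∑ y, PS s * N x s y * Z (w, s) y x w

/-- The CSIR-augmented channel `N̄((y,s_R)|x,s) = N(y|x,s)·𝟙(s_R = s)`. -/
def Nbar {X S Y : Type*} (N : X → S → Y → ℝ) : X → S → (Y × S) → ℝ :=
  fun x s p => if p.2 = s then N x s p.1 else 0

/-- The cyclic twirl of a box `Z`: `Z'(x, ŵ | (w,s), r) = (1/M) Σ_{π ∈ C_M}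
Z(x, π(ŵ) | (π(w), s), r)`, where the cyclic group `C_M` acts on `Fin M` by `+ c`. -/
def twirl {S R X : Type*} [Fintype X] (M : ℕ)
    (Z : (Fin M × S) → R → X → Fin M → ℝ) : (Fin M × S) → R → X → Fin M → ℝ :=
  fun ws r x wh => (M : ℝ)⁻¹ * ∑ c : Fin M, Z (ws.1 + c, ws.2) r x (wh + c)

/-- The scheme `Z''(x, ŵ | (w,s), y) := Z'(x, ŵ | (w,s), (y,s))` obtained from the
twirl `Z'` of `Z` by feeding the transmitter's state into the receiver slot. -/
def collapse {X S Y : Type*} [Fintype X] (M : ℕ)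
    (Z : (Fin M × S) → (Y × S) → X → Fin M → ℝ) : (Fin M × S) → Y → X → Fin M → ℝ :=
  fun ws y x wh => twirl M Z ws (y, ws.2) x wh

/-!
Twirling over the cyclic shifts `ŵ ↦ ŵ + c`, `w ↦ w + c` makes the receiver's output uniform:
`Σ_x Z'(x, ŵ | (w,s), r) = 1/M` whatever the inputs. So letting the receiver's state slot copy
the transmitter's state `s` cannot open a signaling channel from transmitter to receiver, while
the receiver's input-independence of `Σ_ŵ Z` survives the averaging. The success probability
only sees the diagonal `ŵ = w`, which each shift preserves, and over `N̄` only `s_R = s`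
contributes, which is exactly what `Z''` evaluates.
-/

section Twirl

variable {S R X : Type*} [Fintype X] {M : ℕ} {Z : (Fin M × S) → R → X → Fin M → ℝ}

lemma twirl_nonneg (hZ : ∀ ws r x wh, 0 ≤ Z ws r x wh) (ws : Fin M × S) (r : R) (x : X)
    (wh : Fin M) : 0 ≤ twirl M Z ws r x wh := by
  unfold twirl
  exact mul_nonneg (inv_nonneg.2 M.cast_nonneg) (sum_nonneg fun _ _ => hZ _ _ _ _)

lemma twirl_apply_self (w : Fin M) (s : S) (r : R) (x : X) :
    twirl M Z (w, s) r x w = (M : ℝ)⁻¹ * ∑ v, Z (v, s) r x v := by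
  have : NeZero M := ⟨w.pos.ne'⟩
  exact congrArg ((M : ℝ)⁻¹ * ·) (Fintype.sum_equiv (Equiv.addLeft w) _ _ fun _ => rfl)

lemma sum_twirl_snd (ws : Fin M × S) (r : R) (x : X) :
    ∑ wh, twirl M Z ws r x wh = (M : ℝ)⁻¹ * ∑ v, ∑ wh, Z (v, ws.2) r x wh := by
  rcases isEmpty_or_nonempty (Fin M) with hM | ⟨⟨w0⟩⟩
  · simp
  have : NeZero M := ⟨w0.pos.ne'⟩
  simp only [twirl, ← mul_sum]
  rw [sum_comm]
  congr 1
  calc ∑ c, ∑ wh, Z (ws.1 + c, ws.2) r x (wh + c)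
      = ∑ c, ∑ wh, Z (ws.1 + c, ws.2) r x wh :=
        sum_congr rfl fun c _ => Fintype.sum_equiv (Equiv.addRight c) _ _ fun _ => rfl
    _ = ∑ v, ∑ wh, Z (v, ws.2) r x wh := Fintype.sum_equiv (Equiv.addLeft ws.1) _ _ fun _ => rfl

lemma IsNSBox.sum_twirl_fst (hZ : IsNSBox Z) (ws : Fin M × S) (r : R) (wh : Fin M) :
    ∑ x, twirl M Z ws r x wh = (M : ℝ)⁻¹ := by
  have : NeZero M := ⟨wh.pos.ne'⟩
  obtain ⟨-, hnorm, -, hns⟩ := hZ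
  simp only [twirl, ← mul_sum]
  rw [sum_comm]
  convert mul_one _
  calc ∑ c, ∑ x, Z (ws.1 + c, ws.2) r x (wh + c)
      = ∑ c, ∑ x, Z ws r x (wh + c) := sum_congr rfl fun c _ => hns _ _ _ _
    _ = ∑ v, ∑ x, Z ws r x v := Fintype.sum_equiv (Equiv.addLeft wh) _ _ fun _ => rfl
    _ = 1 := by rw [sum_comm, hnorm]

end Twirl

section Collapse

variable {X S Y : Type*} [Fintype X] {M : ℕ} {Z : (Fin M × S) → (Y × S) → X → Fin M → ℝ}

lemma sum_collapse_snd_eq (hZ : IsNSBox Z) (w w' : Fin M) (s : S) (y y' : Y) (x : X) :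
    ∑ wh, collapse M Z (w, s) y x wh = ∑ wh, collapse M Z (w', s) y' x wh := by
  simp only [collapse, sum_twirl_snd]
  exact congrArg ((M : ℝ)⁻¹ * ·) (sum_congr rfl fun v _ => hZ.2.2.1 (v, s) (y, s) (y', s) x)

lemma isNSBox_collapse (hZ : IsNSBox Z) : IsNSBox (collapse M Z) := by
  refine ⟨fun ws y => twirl_nonneg hZ.1 ws (y, ws.2), fun ws y => ?_,
    fun ⟨w, s⟩ y y' x => sum_collapse_snd_eq hZ w w s y y' x,
    fun ws ws' y wh => (hZ.sum_twirl_fst ws _ wh).trans (hZ.sum_twirl_fst ws' _ wh).symm⟩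
  have hM : (M : ℝ) ≠ 0 := Nat.cast_ne_zero.2 ws.1.pos.ne'
  rw [sum_comm]
  simp only [collapse, hZ.sum_twirl_fst, sum_const, card_univ, Fintype.card_fin, nsmul_eq_mul,
    mul_inv_cancel₀ hM]

end Collapse

section SuccessProbability

variable {X S R : Type*} [Fintype X] [Fintype S] [Fintype R] {M : ℕ}

lemma etaCWS_twirl (N : X → S → R → ℝ) (PS : S → ℝ) (Z : (Fin M × S) → R → X → Fin M → ℝ) :
    etaCWS M N PS (twirl M Z) = etaCWS M N PS Z := by
  rcases Nat.eq_zero_or_pos M with rfl | hM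
  · simp [etaCWS]
  unfold etaCWS
  congr 1
  simp only [twirl_apply_self, sum_comm (γ := Fin M)]
  refine sum_congr rfl fun s _ => sum_congr rfl fun x _ => sum_congr rfl fun r _ => ?_
  rw [sum_const, card_univ, Fintype.card_fin, nsmul_eq_mul, ← mul_sum]
  field_simp

lemma etaCWS_nbar {Y : Type*} [Fintype Y] (N : X → S → Y → ℝ) (PS : S → ℝ)
    (Z : (Fin M × S) → (Y × S) → X → Fin M → ℝ) :
    etaCWS M (Nbar N) PS Z = etaCWS M N PS (fun ws y => Z ws (y, ws.2)) := by
  unfold etaCWS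
  congr 1
  refine sum_congr rfl fun w _ => sum_congr rfl fun s _ => sum_congr rfl fun x _ => ?_
  rw [Fintype.sum_prod_type]
  refine sum_congr rfl fun y _ => ?_
  simp [Nbar]

end SuccessProbability

theorem stmt14_general {X S Y : Type*} [Fintype X] [Fintype S] [Fintype Y]
    (N : X → S → Y → ℝ) (PS : S → ℝ)
    (M : ℕ) (Z : (Fin M × S) → (Y × S) → X → Fin M → ℝ) (hZ : IsNSBox Z) :
    IsNSBox (collapse M Z) ∧
    (∀ (w : Fin M) (s : S) (y : Y) (wh : Fin M),
      ∑ x, collapse M Z (w, s) y x wh = (M : ℝ)⁻¹) ∧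
    (∀ (w w' : Fin M) (s : S) (y y' : Y) (x : X),
      ∑ wh, collapse M Z (w, s) y x wh = ∑ wh, collapse M Z (w', s) y' x wh) ∧
    etaCWS M N PS (collapse M Z) = etaCWS M (Nbar N) PS Z := by
  refine ⟨isNSBox_collapse hZ, fun w s y => hZ.sum_twirl_fst (w, s) (y, s),
    sum_collapse_snd_eq hZ, ?_⟩
  calc etaCWS M N PS (collapse M Z) = etaCWS M (Nbar N) PS (twirl M Z) :=
        (etaCWS_nbar N PS (twirl M Z)).symm
    _ = etaCWS M (Nbar N) PS Z := etaCWS_twirl (Nbar N) PS Z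

/-- from any NS-assisted scheme `Z` for the CSIR-augmented channel
`N̄`, the scheme `Z''(x,ŵ|(w,s),y) = Z'(x,ŵ|(w,s),(y,s))` (with `Z'` the cyclic twirl
of `Z`) is a valid NS-assisted scheme for `N` — in particular `Σ_x Z'' = 1/M` and
`Σ_ŵ Z''` depends only on `(x,s)` — and achieves over `N` the same success probability
that `Z` achieves over `N̄`. -/
theorem stmt14 {X S Y : Type*} [Fintype X] [Fintype S] [Fintype Y]
    (N : X → S → Y → ℝ) (hN : IsStateKernel N) (PS : S → ℝ) (hPS : IsPMF PS)
    (M : ℕ) (Z : (Fin M × S) → (Y × S) → X → Fin M → ℝ) (hZ : IsNSBox Z) :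
    IsNSBox (collapse M Z) ∧
    (∀ (w : Fin M) (s : S) (y : Y) (wh : Fin M),
      ∑ x, collapse M Z (w, s) y x wh = (M : ℝ)⁻¹) ∧
    (∀ (w w' : Fin M) (s : S) (y y' : Y) (x : X),
      ∑ wh, collapse M Z (w, s) y x wh = ∑ wh, collapse M Z (w', s) y' x wh) ∧
    etaCWS M N PS (collapse M Z) = etaCWS M (Nbar N) PS Z :=
  stmt14_general N PS M Z hZ
end
end

section
/- Let (N, P_S) be a channel with state on finite alphabets X, Y, S, let n ∈ ℕ, and let P(x^n | s^n) be any conditional pmf on X^n given S^n. Form the joint pmf p(s^n, x^n, y^n) = (Π_{i=1}^n P_S(s_i)) · P(x^n|s^n) · (Π_{i=1}^n N(y_i|x_i,s_i)). Then I(X^n;Y^n|S^n) ≤ Σ_{i=1}^n I(X_i;Y_i|S_i), where each I(X_i;Y_i|S_i) is computed from the marginal of (S_i, X_i, Y_i); in particular, I(X^n;Y^n|S^n) ≤ n · sup over conditional pmfs P_{X|S} of I(X;Y|S) computed from P_S(s)P_{X|S}(x|s)N(y|x,s). -/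
open scoped BigOperators Classical
open Finset Filter

noncomputable section

/-- Conditional mutual information `I(X;Y|S)` (base 2) of a joint pmf `p(s,x,y)`. -/
def condMI {S X Y : Type*} [Fintype S] [Fintype X] [Fintype Y] (p : S → X → Y → ℝ) : ℝ :=
  ∑ s, ∑ x, ∑ y,
    if p s x y = 0 then 0 else
      p s x y * Real.logb 2 (((∑ x', ∑ y', p s x' y') * p s x y) /
        ((∑ y', p s x y') * (∑ x', p s x' y)))

/-!
Let `a(sⁿ, yⁿ)` be the law of `(Sⁿ, Yⁿ)` and `Bᵢ` the law of `(Sᵢ, Yᵢ)`. Because the channel is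
memoryless, both sides are expectations under the `n`-letter law `p`:
`I(Xⁿ;Yⁿ|Sⁿ) = E log (∏ P_S(sᵢ) ∏ N(yᵢ|xᵢ,sᵢ) / a(sⁿ,yⁿ))` and
`I(Xᵢ;Yᵢ|Sᵢ) = E log (P_S(sᵢ) N(yᵢ|xᵢ,sᵢ) / Bᵢ(sᵢ,yᵢ))`.
Their difference is therefore `Σ a log (a / ∏ᵢ Bᵢ)`, the relative entropy of the law of
`(Sⁿ, Yⁿ)` with respect to the product of its single-letter laws, which is nonnegative by Gibbs'
inequality. Each `(Sᵢ, Xᵢ, Yᵢ)` has law `P_S(s) P_{Xᵢ|Sᵢ}(x|s) N(y|x,s)`, so its conditional mutual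
information lies in the set whose supremum is taken; that set is bounded because conditional
mutual information on finite alphabets is.
-/

open Real

theorem sub_le_mul_log_div {a b : ℝ} (ha : 0 ≤ a) (hb : 0 ≤ b) (hab : a ≠ 0 → b ≠ 0) :
    a - b ≤ a * log (a / b) := by
  rcases ha.eq_or_lt with rfl | ha
  · simpa using hb
  have hb : 0 < b := hb.lt_of_ne' (hab ha.ne')
  have := one_sub_inv_le_log_of_pos (div_pos ha hb)
  rw [inv_div] at this
  calc a - b = a * (1 - b / a) := by field_simp
    _ ≤ a * log (a / b) := by gcongr

theorem sum_mul_logb_div_nonneg {ι : Type*} [Fintype ι] (a b : ι → ℝ) (ha : ∀ i, 0 ≤ a i)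
    (hb : ∀ i, 0 ≤ b i) (hab : ∀ i, a i ≠ 0 → b i ≠ 0) (hsum : ∑ i, b i ≤ ∑ i, a i) :
    0 ≤ ∑ i, a i * logb 2 (a i / b i) := by
  have hlog : 0 < log 2 := log_pos one_lt_two
  calc (0 : ℝ) ≤ ∑ i, (a i - b i) / log 2 := by
        rw [← sum_div, sum_sub_distrib]
        exact div_nonneg (sub_nonneg.2 hsum) hlog.le
    _ ≤ ∑ i, a i * logb 2 (a i / b i) := by
        gcongr with i
        rw [logb, ← mul_div_assoc]
        gcongr
        exact sub_le_mul_log_div (ha i) (hb i) (hab i)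

theorem sum_ite_apply_prod_of_sum_eq_one {ι κ : Type*} [Fintype ι] [DecidableEq ι] [Fintype κ]
    (f : ι → κ → ℝ) (hf : ∀ j, ∑ b, f j b = 1) (i : ι) (a : κ) :
    ∑ x : ι → κ, (if x i = a then ∏ j, f j (x j) else 0) = f i a := by
  let t : ∀ j, Finset κ := fun j => if j = i then {a} else univ
  have ht : univ.filter (fun x : ι → κ => x i = a) = Fintype.piFinset t := by
    ext x
    simp only [mem_filter, mem_univ, true_and, Fintype.mem_piFinset, t]
    refine ⟨fun h j => ?_, fun h => by simpa using h i⟩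
    split_ifs with hj <;> simp [hj, h]
  rw [← sum_filter, ht, ← prod_univ_sum,
    prod_congr rfl fun j _ => apply_ite (fun s => ∑ b ∈ s, f j b) _ _ _]
  simp [hf]

theorem sum_prod_eq_one_of_sum_eq_one {ι κ : Type*} [Fintype ι] [DecidableEq ι] [Fintype κ]
    (f : ι → κ → ℝ) (hf : ∀ i, ∑ b, f i b = 1) : ∑ x : ι → κ, ∏ i, f i (x i) = 1 := by
  rw [← Fintype.prod_sum]
  simp [hf]

section Marginal

variable {S' X' Y' S X Y : Type*} [Fintype S'] [Fintype X'] [Fintype Y']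

def marginal (p : S' → X' → Y' → ℝ) (f : S' → S) (g : X' → X) (h : Y' → Y)
    (s : S) (x : X) (y : Y) : ℝ :=
  ∑ s', ∑ x', ∑ y', if f s' = s ∧ g x' = x ∧ h y' = y then p s' x' y' else 0

theorem marginal_eq_sum_filter (p : S' → X' → Y' → ℝ) (f : S' → S) (g : X' → X) (h : Y' → Y)
    (s : S) (x : X) (y : Y) : marginal p f g h s x y
      = ∑ w : S' × X' × Y' with (f w.1, g w.2.1, h w.2.2) = (s, x, y), p w.1 w.2.1 w.2.2 := by
  simp [marginal, sum_filter, Fintype.sum_prod_type]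

theorem sum_marginal_mul [Fintype S] [Fintype X] [Fintype Y] (p : S' → X' → Y' → ℝ)
    (f : S' → S) (g : X' → X) (h : Y' → Y) (G : S → X → Y → ℝ) :
    ∑ s, ∑ x, ∑ y, marginal p f g h s x y * G s x y
      = ∑ s', ∑ x', ∑ y', p s' x' y' * G (f s') (g x') (h y') := by
  let F : S' × X' × Y' → S × X × Y := fun w => (f w.1, g w.2.1, h w.2.2)
  have hfiber : ∀ s x y, marginal p f g h s x y * G s x y
      = ∑ w with F w = (s, x, y), p w.1 w.2.1 w.2.2 * G (F w).1 (F w).2.1 (F w).2.2 := by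
    intro s x y
    rw [marginal_eq_sum_filter, sum_mul]
    exact sum_congr rfl fun w hw => by rw [(mem_filter.1 hw).2]
  simp only [hfiber]
  simpa [Fintype.sum_prod_type] using sum_fiberwise univ F
    (fun w => p w.1 w.2.1 w.2.2 * G (F w).1 (F w).2.1 (F w).2.2)

theorem marginal_nonneg (p : S' → X' → Y' → ℝ) (hp : ∀ s x y, 0 ≤ p s x y)
    (f : S' → S) (g : X' → X) (h : Y' → Y) (s : S) (x : X) (y : Y) :
    0 ≤ marginal p f g h s x y := by
  rw [marginal_eq_sum_filter]
  exact sum_nonneg fun w _ => hp _ _ _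

theorem le_marginal (p : S' → X' → Y' → ℝ) (hp : ∀ s x y, 0 ≤ p s x y)
    (f : S' → S) (g : X' → X) (h : Y' → Y) (s : S') (x : X') (y : Y') :
    p s x y ≤ marginal p f g h (f s) (g x) (h y) := by
  rw [marginal_eq_sum_filter]
  exact single_le_sum (f := fun w : S' × X' × Y' => p w.1 w.2.1 w.2.2)
    (fun w _ => hp _ _ _) (a := (s, x, y)) (by simp)

end Marginal

theorem exists_isPMF_mul_eq {S X : Type*} [Fintype X] [Nonempty X] (A : S → X → ℝ) (w : S → ℝ)
    (hA : ∀ s x, 0 ≤ A s x) (hw : ∀ s, ∑ x, A s x = w s) :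
    ∃ Q : S → X → ℝ, (∀ s, IsPMF (Q s)) ∧ ∀ s x, A s x = w s * Q s x := by
  refine ⟨fun s x => if w s = 0 then (Fintype.card X : ℝ)⁻¹ else A s x / w s,
    fun s => ?_, fun s x => ?_⟩
  · by_cases h : w s = 0
    · simp only [h, if_true]
      exact ⟨fun _ => by positivity, by simp⟩
    · simp only [h, if_false]
      refine ⟨fun x => div_nonneg (hA s x) ?_, by rw [← sum_div, hw, div_self h]⟩
      exact hw s ▸ sum_nonneg fun x _ => hA s x
  · by_cases h : w s = 0
    · rw [h, zero_mul]
      exact (sum_eq_zero_iff_of_nonneg fun x _ => hA s x).1 (hw s ▸ h) x (mem_univ x)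
    · simp only [h, if_false]
      field_simp

section CondMI

variable {S X Y : Type*} [Fintype S] [Fintype X] [Fintype Y]

theorem condMI_mul_kernel (A : S → X → ℝ) (K : S → X → Y → ℝ) (hK : ∀ s x, ∑ y, K s x y = 1) :
    condMI (fun s x y => A s x * K s x y) = ∑ s, ∑ x, ∑ y,
      A s x * K s x y * logb 2 ((∑ x', A s x') * K s x y / ∑ x', A s x' * K s x' y) := by
  unfold condMI
  refine sum_congr rfl fun s _ => sum_congr rfl fun x _ => sum_congr rfl fun y _ => ?_
  simp only [← mul_sum, hK, mul_one]
  split_ifs with h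
  · simp [h]
  · rw [mul_left_comm, mul_div_mul_left _ _ (left_ne_zero_of_mul h)]

theorem condMI_le_card (p : S → X → Y → ℝ) (hp : ∀ s x y, 0 ≤ p s x y)
    (hsum : ∑ s, ∑ x, ∑ y, p s x y = 1) :
    condMI p ≤ Fintype.card S * Fintype.card X * Fintype.card Y / log 2 := by
  have hterm : ∀ s x y, (if p s x y = 0 then 0 else
      p s x y * logb 2 (((∑ x', ∑ y', p s x' y') * p s x y) /
        ((∑ y', p s x y') * (∑ x', p s x' y)))) ≤ 1 / log 2 := by
    intro s x y
    split_ifs with h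
    · positivity
    set w := ∑ x', ∑ y', p s x' y'
    set A := ∑ y', p s x y'
    set B := ∑ x', p s x' y
    have hp0 : 0 < p s x y := (hp s x y).lt_of_ne' h
    have hA : p s x y ≤ A := single_le_sum (fun y' _ => hp s x y') (mem_univ y)
    have hB : p s x y ≤ B := single_le_sum (fun x' _ => hp s x' y) (mem_univ x)
    have hw0 : 0 ≤ w := sum_nonneg fun x' _ => sum_nonneg fun y' _ => hp s x' y'
    have hw : w ≤ 1 := hsum ▸ single_le_sum
      (fun s' _ => sum_nonneg fun x' _ => sum_nonneg fun y' _ => hp s' x' y') (mem_univ s)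
    have hAB : 0 < A * B := mul_pos (hp0.trans_le hA) (hp0.trans_le hB)
    -- `log r ≤ r`, and `p * (w * p / (A * B)) ≤ w ≤ 1` because `p ≤ A` and `p ≤ B`.
    rw [logb, ← mul_div_assoc]
    gcongr
    calc p s x y * log (w * p s x y / (A * B)) ≤ p s x y * (w * p s x y / (A * B)) := by
          gcongr
          exact log_le_self (by positivity)
      _ ≤ 1 := by
          rw [mul_div_assoc', div_le_one hAB]
          nlinarith [mul_le_mul hA hB hp0.le (hp0.le.trans hA), mul_pos hp0 hp0]
  calc condMI p ≤ ∑ s : S, ∑ x : X, ∑ y : Y, 1 / log 2 :=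
        sum_le_sum fun s _ => sum_le_sum fun x _ => sum_le_sum fun y _ => hterm s x y
    _ = Fintype.card S * Fintype.card X * Fintype.card Y / log 2 := by
        simp only [sum_const, card_univ, nsmul_eq_mul]
        ring

theorem bddAbove_condMI_inputs (N : X → S → Y → ℝ) (hN : IsStateKernel N) (PS : S → ℝ)
    (hPS : IsPMF PS) : BddAbove {r : ℝ | ∃ PXS : S → X → ℝ, (∀ s, IsPMF (PXS s)) ∧
      r = condMI (fun s x y => PS s * PXS s x * N x s y)} := by
  refine ⟨Fintype.card S * Fintype.card X * Fintype.card Y / log 2, ?_⟩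
  rintro r ⟨Q, hQ, rfl⟩
  refine condMI_le_card _ (fun s x y => ?_) ?_
  · exact mul_nonneg (mul_nonneg (hPS.1 s) ((hQ s).1 x)) (hN.1 x s y)
  · simp only [← mul_sum, hN.2, mul_one, (hQ _).2, hPS.2]

end CondMI

section Memoryless

variable {X S Y : Type*} [Fintype X] [Fintype S] [Fintype Y]
  (N : X → S → Y → ℝ) (PS : S → ℝ) {n : ℕ} (P : (Fin n → S) → (Fin n → X) → ℝ)

def memorylessJoint (s : Fin n → S) (x : Fin n → X) (y : Fin n → Y) : ℝ :=
  (∏ i, PS (s i)) * P s x * ∏ i, N (x i) (s i) (y i)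

def coordMarginal (i : Fin n) : S → X → Y → ℝ :=
  marginal (memorylessJoint N PS P) (fun s => s i) (fun x => x i) (fun y => y i)

def inputMarginal (i : Fin n) (s : S) (x : X) : ℝ :=
  ∑ s' : Fin n → S, ∑ x' : Fin n → X, if s' i = s ∧ x' i = x then (∏ j, PS (s' j)) * P s' x' else 0

def outputMarginal (i : Fin n) (s : S) (y : Y) : ℝ :=
  ∑ x, inputMarginal PS P i s x * N x s y

theorem memorylessJoint_nonneg (hN : IsStateKernel N) (hPS : IsPMF PS) (hP : ∀ s, IsPMF (P s))
    (s : Fin n → S) (x : Fin n → X) (y : Fin n → Y) : 0 ≤ memorylessJoint N PS P s x y :=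
  mul_nonneg (mul_nonneg (prod_nonneg fun _ _ => hPS.1 _) ((hP s).1 x))
    (prod_nonneg fun _ _ => hN.1 _ _ _)

theorem sum_memorylessJoint (hN : IsStateKernel N) (hPS : IsPMF PS) (hP : ∀ s, IsPMF (P s)) :
    ∑ s, ∑ x, ∑ y, memorylessJoint N PS P s x y = 1 := by
  simp only [memorylessJoint, ← mul_sum, sum_prod_eq_one_of_sum_eq_one _ fun i => hN.2 _ _, mul_one,
    (hP _).2, sum_prod_eq_one_of_sum_eq_one _ fun _ => hPS.2]

theorem inputMarginal_nonneg (hPS : IsPMF PS) (hP : ∀ s, IsPMF (P s)) (i : Fin n) (s : S) (x : X) :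
    0 ≤ inputMarginal PS P i s x :=
  sum_nonneg fun s' _ => sum_nonneg fun x' _ => by
    split_ifs
    · exact mul_nonneg (prod_nonneg fun _ _ => hPS.1 _) ((hP s').1 x')
    · exact le_rfl

theorem sum_inputMarginal (hPS : IsPMF PS) (hP : ∀ s, IsPMF (P s)) (i : Fin n) (s : S) :
    ∑ x, inputMarginal PS P i s x = PS s := by
  calc ∑ x, inputMarginal PS P i s x
        = ∑ s' : Fin n → S, if s' i = s then ∏ j, PS (s' j) else 0 := by
        unfold inputMarginal
        rw [sum_comm]
        refine sum_congr rfl fun s' _ => ?_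
        rw [sum_comm]
        split_ifs with h <;> simp [h, ← mul_sum, (hP s').2]
    _ = PS s := sum_ite_apply_prod_of_sum_eq_one _ (fun _ => hPS.2) i s

theorem coordMarginal_eq (hN : IsStateKernel N) (i : Fin n) (s : S) (x : X) (y : Y) :
    coordMarginal N PS P i s x y = inputMarginal PS P i s x * N x s y := by
  simp only [coordMarginal, marginal, inputMarginal, sum_mul, ite_mul, zero_mul]
  refine sum_congr rfl fun s' _ => sum_congr rfl fun x' _ => ?_
  split_ifs with h
  · obtain ⟨rfl, rfl⟩ := h
    rw [← sum_ite_apply_prod_of_sum_eq_one (fun j b => N (x' j) (s' j) b) (fun j => hN.2 _ _) i y,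
      mul_sum]
    refine sum_congr rfl fun y' _ => ?_
    simp [memorylessJoint]
  · exact sum_eq_zero fun y' _ => if_neg fun h' => h ⟨h'.1, h'.2.1⟩

theorem outputMarginal_nonneg (hN : IsStateKernel N) (hPS : IsPMF PS) (hP : ∀ s, IsPMF (P s))
    (i : Fin n) (s : S) (y : Y) : 0 ≤ outputMarginal N PS P i s y :=
  sum_nonneg fun x _ => mul_nonneg (inputMarginal_nonneg PS P hPS hP i s x) (hN.1 _ _ _)

theorem outputMarginal_pos (hN : IsStateKernel N) (hPS : IsPMF PS) (hP : ∀ s, IsPMF (P s))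
    {s : Fin n → S} {x : Fin n → X} {y : Fin n → Y} (h : memorylessJoint N PS P s x y ≠ 0)
    (i : Fin n) : 0 < outputMarginal N PS P i (s i) (y i) := by
  have hq : ∀ x', 0 ≤ coordMarginal N PS P i (s i) x' (y i) := fun x' =>
    marginal_nonneg _ (memorylessJoint_nonneg N PS P hN hPS hP) _ _ _ _ _ _
  calc 0 < memorylessJoint N PS P s x y :=
        (memorylessJoint_nonneg N PS P hN hPS hP s x y).lt_of_ne' h
    _ ≤ coordMarginal N PS P i (s i) (x i) (y i) :=
        le_marginal _ (memorylessJoint_nonneg N PS P hN hPS hP) _ _ _ s x y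
    _ ≤ ∑ x', coordMarginal N PS P i (s i) x' (y i) :=
        single_le_sum (fun x' _ => hq x') (mem_univ _)
    _ = outputMarginal N PS P i (s i) (y i) := by
        simp only [coordMarginal_eq N PS P hN, outputMarginal]

theorem sum_prod_outputMarginal (hN : IsStateKernel N) (hPS : IsPMF PS) (hP : ∀ s, IsPMF (P s)) :
    ∑ s : Fin n → S, ∑ y : Fin n → Y, ∏ i, outputMarginal N PS P i (s i) (y i) = 1 := by
  have hsum : ∀ i s, ∑ y, outputMarginal N PS P i s y = PS s := fun i s => by
    simp only [outputMarginal, sum_comm (γ := Y), ← mul_sum, hN.2, mul_one,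
      sum_inputMarginal PS P hPS hP]
  simp only [← Fintype.prod_sum, hsum, sum_prod_eq_one_of_sum_eq_one _ fun _ => hPS.2]

theorem condMI_memorylessJoint (hN : IsStateKernel N) (hP : ∀ s, IsPMF (P s)) :
    condMI (memorylessJoint N PS P) = ∑ s : Fin n → S, ∑ x : Fin n → X, ∑ y : Fin n → Y,
      memorylessJoint N PS P s x y * logb 2 ((∏ i, PS (s i)) * (∏ i, N (x i) (s i) (y i)) /
        ∑ x', memorylessJoint N PS P s x' y) := by
  have h := condMI_mul_kernel (fun s x => (∏ i, PS (s i)) * P s x)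
    (fun s x (y : Fin n → Y) => ∏ i, N (x i) (s i) (y i))
    fun s x => sum_prod_eq_one_of_sum_eq_one _ fun i => hN.2 _ _
  simp only [← mul_sum, (hP _).2, mul_one] at h
  exact h

theorem condMI_coordMarginal (hN : IsStateKernel N) (hPS : IsPMF PS) (hP : ∀ s, IsPMF (P s))
    (i : Fin n) : condMI (coordMarginal N PS P i) = ∑ s, ∑ x, ∑ y, memorylessJoint N PS P s x y *
      logb 2 (PS (s i) * N (x i) (s i) (y i) / outputMarginal N PS P i (s i) (y i)) := by
  have hq : coordMarginal N PS P i = fun s x y => inputMarginal PS P i s x * N x s y :=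
    funext₃ (coordMarginal_eq N PS P hN i)
  rw [hq, condMI_mul_kernel _ _ fun s x => hN.2 x s]
  calc _ = ∑ s, ∑ x, ∑ y, coordMarginal N PS P i s x y *
        logb 2 (PS s * N x s y / outputMarginal N PS P i s y) := by
        simp only [sum_inputMarginal PS P hPS hP, coordMarginal_eq N PS P hN, outputMarginal]
    _ = _ := sum_marginal_mul _ _ _ _ _

theorem sum_logb_coord_sub_logb_joint (hN : IsStateKernel N) (hPS : IsPMF PS)
    (hP : ∀ s, IsPMF (P s))
    {s : Fin n → S} {x : Fin n → X} {y : Fin n → Y} (h : memorylessJoint N PS P s x y ≠ 0) :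
    ∑ i, logb 2 (PS (s i) * N (x i) (s i) (y i) / outputMarginal N PS P i (s i) (y i))
      - logb 2 ((∏ i, PS (s i)) * (∏ i, N (x i) (s i) (y i)) / ∑ x', memorylessJoint N PS P s x' y)
      = logb 2 ((∑ x', memorylessJoint N PS P s x' y) /
          ∏ i, outputMarginal N PS P i (s i) (y i)) := by
  have hW : ∏ i, PS (s i) ≠ 0 := left_ne_zero_of_mul (left_ne_zero_of_mul h)
  have hNn : ∏ i, N (x i) (s i) (y i) ≠ 0 := right_ne_zero_of_mul h
  have hB : ∏ i, outputMarginal N PS P i (s i) (y i) ≠ 0 :=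
    prod_ne_zero_iff.2 fun i _ => (outputMarginal_pos N PS P hN hPS hP h i).ne'
  have ha : ∑ x', memorylessJoint N PS P s x' y ≠ 0 := by
    refine ((memorylessJoint_nonneg N PS P hN hPS hP s x y).lt_of_ne' h |>.trans_le ?_).ne'
    exact single_le_sum (fun x' _ => memorylessJoint_nonneg N PS P hN hPS hP s x' y) (mem_univ x)
  have hterm : ∀ i ∈ univ,
      PS (s i) * N (x i) (s i) (y i) / outputMarginal N PS P i (s i) (y i) ≠ 0 :=
    fun i hi => div_ne_zero (mul_ne_zero (prod_ne_zero_iff.1 hW i hi) (prod_ne_zero_iff.1 hNn i hi))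
      (prod_ne_zero_iff.1 hB i hi)
  rw [← logb_prod _ _ hterm, ← logb_div (prod_ne_zero_iff.2 hterm) (by positivity),
    prod_div_distrib, prod_mul_distrib]
  congr 1
  field_simp

theorem condMI_memorylessJoint_le_sum (hN : IsStateKernel N) (hPS : IsPMF PS)
    (hP : ∀ s, IsPMF (P s)) :
    condMI (memorylessJoint N PS P) ≤ ∑ i, condMI (coordMarginal N PS P i) := by
  have hp := memorylessJoint_nonneg N PS P hN hPS hP
  set a : (Fin n → S) → (Fin n → Y) → ℝ := fun s y => ∑ x, memorylessJoint N PS P s x y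
  set b : (Fin n → S) → (Fin n → Y) → ℝ := fun s y => ∏ i, outputMarginal N PS P i (s i) (y i)
  have hsum : ∑ i, condMI (coordMarginal N PS P i) = ∑ s, ∑ x, ∑ y, memorylessJoint N PS P s x y *
      ∑ i, logb 2 (PS (s i) * N (x i) (s i) (y i) / outputMarginal N PS P i (s i) (y i)) := by
    simp only [condMI_coordMarginal N PS P hN hPS hP, mul_sum]
    rw [sum_comm]
    exact sum_congr rfl fun s _ => by rw [sum_comm]; exact sum_congr rfl fun x _ => sum_comm
  have hgap : ∑ i, condMI (coordMarginal N PS P i) - condMI (memorylessJoint N PS P)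
      = ∑ s, ∑ y, a s y * logb 2 (a s y / b s y) := by
    rw [hsum, condMI_memorylessJoint N PS P hN hP]
    simp only [← sum_sub_distrib, sum_mul, a, b]
    refine sum_congr rfl fun s _ => ?_
    rw [sum_comm]
    refine sum_congr rfl fun y _ => sum_congr rfl fun x _ => ?_
    by_cases h : memorylessJoint N PS P s x y = 0
    · simp [h]
    · rw [← mul_sub, sum_logb_coord_sub_logb_joint N PS P hN hPS hP h]
  have hgibbs : 0 ≤ ∑ s, ∑ y, a s y * logb 2 (a s y / b s y) := by
    rw [← Fintype.sum_prod_type']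
    refine sum_mul_logb_div_nonneg _ _ (fun z => sum_nonneg fun x _ => hp _ _ _)
      (fun z => prod_nonneg fun i _ => outputMarginal_nonneg N PS P hN hPS hP _ _ _)
      (fun z hz => ?_) (le_of_eq ?_)
    · obtain ⟨x, -, hx⟩ := exists_ne_zero_of_sum_ne_zero hz
      exact prod_ne_zero_iff.2 fun i _ => (outputMarginal_pos N PS P hN hPS hP hx i).ne'
    · rw [Fintype.sum_prod_type, Fintype.sum_prod_type]
      simp only [a, b, sum_prod_outputMarginal N PS P hN hPS hP]
      rw [← sum_memorylessJoint N PS P hN hPS hP]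
      exact (sum_congr rfl fun s _ => sum_comm).symm
  linarith

theorem exists_coordMarginal_eq (hN : IsStateKernel N) (hPS : IsPMF PS) (hP : ∀ s, IsPMF (P s))
    (i : Fin n) : ∃ PXS : S → X → ℝ, (∀ s, IsPMF (PXS s)) ∧
      coordMarginal N PS P i = fun s x y => PS s * PXS s x * N x s y := by
  have : Nonempty X := by
    obtain ⟨s, -, hs⟩ := exists_ne_zero_of_sum_ne_zero (hPS.2.symm ▸ one_ne_zero : ∑ s, PS s ≠ 0)
    rw [← sum_inputMarginal PS P hPS hP i] at hs
    obtain ⟨x, -, -⟩ := exists_ne_zero_of_sum_ne_zero hs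
    exact ⟨x⟩
  obtain ⟨Q, hQ, hA⟩ := exists_isPMF_mul_eq (inputMarginal PS P i) PS
    (inputMarginal_nonneg PS P hPS hP i) (sum_inputMarginal PS P hPS hP i)
  exact ⟨Q, hQ, funext₃ fun s x y => by rw [coordMarginal_eq N PS P hN, hA]⟩

end Memoryless

/-- single-letterization: for any conditional input pmf `P(x^n|s^n)`
over the `n`-fold memoryless channel with state, `I(X^n;Y^n|S^n) ≤ Σ_i I(X_i;Y_i|S_i)`,
and hence `I(X^n;Y^n|S^n) ≤ n · sup_{P_{X|S}} I(X;Y|S)`. -/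
theorem stmt17 {X S Y : Type*} [Fintype X] [Fintype S] [Fintype Y]
    (N : X → S → Y → ℝ) (hN : IsStateKernel N) (PS : S → ℝ) (hPS : IsPMF PS)
    (n : ℕ) (P : (Fin n → S) → (Fin n → X) → ℝ) (hP : ∀ s, IsPMF (P s)) :
    condMI (fun (s : Fin n → S) (x : Fin n → X) (y : Fin n → Y) =>
        (∏ i, PS (s i)) * P s x * ∏ i, N (x i) (s i) (y i))
      ≤ ∑ i : Fin n, condMI (fun (si : S) (xi : X) (yi : Y) =>
          ∑ s : Fin n → S, ∑ x : Fin n → X, ∑ y : Fin n → Y,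
            if s i = si ∧ x i = xi ∧ y i = yi then
              (∏ j, PS (s j)) * P s x * ∏ j, N (x j) (s j) (y j)
            else 0) ∧
    condMI (fun (s : Fin n → S) (x : Fin n → X) (y : Fin n → Y) =>
        (∏ i, PS (s i)) * P s x * ∏ i, N (x i) (s i) (y i))
      ≤ n * sSup {r : ℝ | ∃ PXS : S → X → ℝ, (∀ s, IsPMF (PXS s)) ∧
          r = condMI (fun s x y => PS s * PXS s x * N x s y)} := by
  have hle := condMI_memorylessJoint_le_sum N PS P hN hPS hP
  refine ⟨hle, hle.trans ((sum_le_sum fun i _ =>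
    le_csSup (bddAbove_condMI_inputs N hN PS hPS) ?_).trans_eq ?_)⟩
  · obtain ⟨Q, hQ, hq⟩ := exists_coordMarginal_eq N PS P hN hPS hP i
    exact ⟨Q, hQ, by rw [hq]⟩
  · rw [sum_const, card_univ, Fintype.card_fin, nsmul_eq_mul]
end
end
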